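/- Let C be a polygonal curve with vertices p_0, …, p_m and L(C) > 0, and suppose that L(f(C)) = L(C) and that the arclength-parameterized linear interpolations of C and of f(C) coincide: P_{f(C)}(s) = P_C(s) for all s ∈ [0, L(C)]. Then f(C) is equilateral. -/

import Mathlib

open Finset Filter

noncomputable section

/-- The length of the polygonal curve with vertices `p 0, …, p m`
(also the arclength distance from `p 0` to `p m` along the curve). -/
def polyLength {dim : ℕ} (p : ℕ → EuclideanSpace ℝ (Fin dim)) (m : ℕ) : ℝ :=
  ∑ i ∈ Finset.range m, ‖p (i + 1) - p i‖

/-- `P` is the arclength-parameterized linear interpolation of the polygonal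
curve with vertices `p 0, …, p m`:
`P ((1-t)·d_{k-1} + t·d_k) = (1-t)·p_{k-1} + t·p_k` for `t ∈ [0,1]`, `k = 1, …, m`,
where `d_k = polyLength p k` is the arclength up to vertex `k`. -/
def IsArcParam {dim : ℕ} (p : ℕ → EuclideanSpace ℝ (Fin dim)) (m : ℕ)
    (P : ℝ → EuclideanSpace ℝ (Fin dim)) : Prop :=
  ∀ k : ℕ, 1 ≤ k → k ≤ m → ∀ t : ℝ, 0 ≤ t → t ≤ 1 →
    P ((1 - t) * polyLength p (k - 1) + t * polyLength p k)
      = (1 - t) • p (k - 1) + t • p k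

/-- The polygonal curve with vertices `p 0, …, p m` is equilateral:
all consecutive interpoint distances agree. -/
def IsEquilateral {dim : ℕ} (p : ℕ → EuclideanSpace ℝ (Fin dim)) (m : ℕ) : Prop :=
  ∀ k l : ℕ, 1 ≤ k → k ≤ m → 1 ≤ l → l ≤ m →
    ‖p k - p (k - 1)‖ = ‖p l - p (l - 1)‖

/-- `q 0, …, q m` are the vertices of the arclength respacing `f(C)` of the
polygonal curve `C` with vertices `p 0, …, p m`:
`q k = P (k·L(C)/m)` where `P` is the arclength parameterization of `C`;
by convention `f(C) := C` when `L(C) = 0`. -/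
def Respaces {dim : ℕ} (m : ℕ) (p q : ℕ → EuclideanSpace ℝ (Fin dim)) : Prop :=
  (polyLength p m = 0 ∧ ∀ k ≤ m, q k = p k) ∨
  (0 < polyLength p m ∧ ∃ P : ℝ → EuclideanSpace ℝ (Fin dim), IsArcParam p m P ∧
    ∀ k ≤ m, q k = P ((k : ℝ) * polyLength p m / m))

/-!
Since arclength is the parameter, the interpolation `P` of `C` is `1`-Lipschitz on
`[0, L(C)]`, so each edge of `f(C)`, joining `P (k L/m)` to `P ((k+1) L/m)`, has length at
most `L(C)/m`. The `m` edges add up to `L(f(C)) = L(C)`, so every inequality is an equality.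
-/

variable {dim : ℕ} {p : ℕ → EuclideanSpace ℝ (Fin dim)} {m : ℕ}

lemma polyLength_succ (p : ℕ → EuclideanSpace ℝ (Fin dim)) (k : ℕ) :
    polyLength p (k + 1) = polyLength p k + ‖p (k + 1) - p k‖ :=
  sum_range_succ _ _

lemma polyLength_nonneg (p : ℕ → EuclideanSpace ℝ (Fin dim)) (k : ℕ) :
    0 ≤ polyLength p k :=
  sum_nonneg fun _ _ => norm_nonneg _

namespace IsArcParam

variable {P : ℝ → EuclideanSpace ℝ (Fin dim)}

lemma mono {n : ℕ} (hP : IsArcParam p m P) (hnm : n ≤ m) : IsArcParam p n P :=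
  fun k hk1 hkn => hP k hk1 (hkn.trans hnm)

lemma eq_of_mem_edge (hP : IsArcParam p m P) {k : ℕ} (hk : k < m) {s : ℝ}
    (hs₀ : polyLength p k ≤ s) (hs₁ : s ≤ polyLength p (k + 1))
    (hedge : ‖p (k + 1) - p k‖ ≠ 0) :
    P s = p k + ((s - polyLength p k) / ‖p (k + 1) - p k‖) • (p (k + 1) - p k) := by
  set ℓ := ‖p (k + 1) - p k‖
  rw [polyLength_succ] at hs₁
  have hℓ : 0 < ℓ := lt_of_le_of_ne (norm_nonneg _) (Ne.symm hedge)
  set t := (s - polyLength p k) / ℓ with ht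
  have ht₀ : 0 ≤ t := div_nonneg (by linarith) hℓ.le
  have ht₁ : t ≤ 1 := (div_le_one hℓ).mpr (by linarith)
  have hst : (1 - t) * polyLength p k + t * polyLength p (k + 1) = s := by
    rw [polyLength_succ, ht]
    field_simp
    ring
  have h := hP (k + 1) (by omega) hk t ht₀ ht₁
  rw [Nat.add_sub_cancel, hst] at h
  rw [h]
  module

lemma norm_sub_eq_of_mem_edge (hP : IsArcParam p m P) {k : ℕ} (hk : k < m) {a b : ℝ}
    (ha : polyLength p k ≤ a) (hab : a ≤ b) (hb : b ≤ polyLength p (k + 1)) :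
    ‖P b - P a‖ = b - a := by
  set ℓ := ‖p (k + 1) - p k‖
  by_cases hedge : ℓ = 0
  · have : a = b := by rw [polyLength_succ] at hb; linarith
    simp [this]
  have hℓ : 0 < ℓ := lt_of_le_of_ne (norm_nonneg _) (Ne.symm hedge)
  have hdiff : P b - P a = ((b - a) / ℓ) • (p (k + 1) - p k) := by
    rw [hP.eq_of_mem_edge hk (ha.trans hab) hb hedge,
      hP.eq_of_mem_edge hk ha (hab.trans hb) hedge]
    module
  rw [hdiff, norm_smul, Real.norm_of_nonneg (div_nonneg (by linarith) hℓ.le),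
    div_mul_cancel₀ _ hedge]

lemma norm_sub_le (hP : IsArcParam p m P) {a b : ℝ} (ha : 0 ≤ a) (hab : a ≤ b)
    (hb : b ≤ polyLength p m) : ‖P b - P a‖ ≤ b - a := by
  induction m generalizing a b with
  | zero =>
    have : b = a := by simp only [polyLength, range_zero, sum_empty] at hb; linarith
    simp [this]
  | succ n ih =>
    have hn := hP.mono n.le_succ
    set d := polyLength p n
    rcases le_total b d with hbd | hdb
    · exact ih hn ha hab hbd
    rcases le_total d a with hda | had
    · exact (hP.norm_sub_eq_of_mem_edge n.lt_succ_self hda hab hb).le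
    calc ‖P b - P a‖ ≤ ‖P b - P d‖ + ‖P d - P a‖ := norm_sub_le_norm_sub_add_norm_sub _ _ _
      _ ≤ (b - d) + (d - a) := by
        gcongr
        · exact (hP.norm_sub_eq_of_mem_edge n.lt_succ_self le_rfl hdb hb).le
        · exact ih hn ha had le_rfl
      _ = b - a := by ring

lemma norm_sub_sample_le (hP : IsArcParam p m P) {q : ℕ → EuclideanSpace ℝ (Fin dim)}
    (hq : ∀ k ≤ m, q k = P ((k : ℝ) * polyLength p m / m)) {i : ℕ} (hi : i < m) :
    ‖q (i + 1) - q i‖ ≤ polyLength p m / m := by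
  have hL := polyLength_nonneg p m
  have hm : (0 : ℝ) < m := by exact_mod_cast (Nat.zero_le i).trans_lt hi
  have hstep : ((i + 1 : ℕ) : ℝ) * polyLength p m / m - i * polyLength p m / m =
      polyLength p m / m := by
    push_cast; ring
  rw [hq i hi.le, hq (i + 1) hi, ← hstep]
  refine hP.norm_sub_le (by positivity) (by gcongr; simp) ?_
  rw [div_le_iff₀ hm, mul_comm]
  exact mul_le_mul_of_nonneg_left (by exact_mod_cast hi) hL

end IsArcParam

lemma norm_sub_eq_of_le_of_polyLength_eq {q : ℕ → EuclideanSpace ℝ (Fin dim)} {c : ℝ}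
    (hle : ∀ i < m, ‖q (i + 1) - q i‖ ≤ c) (hsum : polyLength q m = m * c) :
    ∀ i < m, ‖q (i + 1) - q i‖ = c := by
  have hsum' : ∑ i ∈ range m, ‖q (i + 1) - q i‖ = ∑ _i ∈ range m, c := by
    rw [sum_const, card_range, nsmul_eq_mul, ← hsum, polyLength]
  exact fun i hi => (sum_eq_sum_iff_of_le fun j hj => hle j (mem_range.mp hj)).mp hsum' i
    (mem_range.mpr hi)

lemma isEquilateral_of_norm_sub_eq {q : ℕ → EuclideanSpace ℝ (Fin dim)} {c : ℝ}
    (h : ∀ i < m, ‖q (i + 1) - q i‖ = c) : IsEquilateral q m := by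
  intro k l hk1 hkm hl1 hlm
  have hk := h (k - 1) (by omega)
  have hl := h (l - 1) (by omega)
  rw [Nat.sub_add_cancel hk1] at hk
  rw [Nat.sub_add_cancel hl1] at hl
  rw [hk, hl]

theorem stmt5_general {dim m : ℕ} (p : ℕ → EuclideanSpace ℝ (Fin dim))
    (P : ℝ → EuclideanSpace ℝ (Fin dim)) (hP : IsArcParam p m P)
    (q : ℕ → EuclideanSpace ℝ (Fin dim))
    (hq : ∀ k ≤ m, q k = P ((k : ℝ) * polyLength p m / m))
    (hLeq : polyLength q m = polyLength p m) :
    IsEquilateral q m := by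
  have hlen : polyLength q m = m * (polyLength p m / m) := by
    rcases Nat.eq_zero_or_pos m with rfl | hm
    · simp [polyLength]
    · rw [hLeq, mul_div_cancel₀ _ (by positivity)]
  exact isEquilateral_of_norm_sub_eq
    (norm_sub_eq_of_le_of_polyLength_eq (fun _ hi => hP.norm_sub_sample_le hq hi) hlen)

/-- If `L(f(C)) = L(C)` and the arclength parameterized linear interpolations
of `C` and `f(C)` coincide, then `f(C)` is equilateral. -/
theorem stmt5 {dim m : ℕ} (hm : 1 ≤ m) (p : ℕ → EuclideanSpace ℝ (Fin dim))
    (hL : 0 < polyLength p m)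
    (P : ℝ → EuclideanSpace ℝ (Fin dim)) (hP : IsArcParam p m P)
    (q : ℕ → EuclideanSpace ℝ (Fin dim))
    (hq : ∀ k ≤ m, q k = P ((k : ℝ) * polyLength p m / m))
    (hLeq : polyLength q m = polyLength p m)
    (Q : ℝ → EuclideanSpace ℝ (Fin dim)) (hQ : IsArcParam q m Q)
    (hcoinc : ∀ s : ℝ, 0 ≤ s → s ≤ polyLength p m → Q s = P s) :
    IsEquilateral q m :=
  stmt5_general p P hP q hq hLeq
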